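/- (Fidelity bound, Bayes criterion.) Let Ψ be a unit vector in ℂ^{d_A} ⊗ ℂ^{d_B}, let U₀ and U₁ be unitary matrices on ℂ^{d_A} ⊗ ℂ^{d_B}, and let U_B be any unitary matrix on ℂ^{d_B}. Let E₀, E₁ be positive semidefinite matrices on ℂ^{d_A} with E₀ + E₁ = 1_A. Define P₁₀ = Re tr[(E₁ ⊗ 1_B) U₀ |Ψ⟩⟨Ψ| U₀ᴴ], P₀₁ = Re tr[(E₀ ⊗ 1_B) U₁ |Ψ⟩⟨Ψ| U₁ᴴ], and F = |⟨Ψ, U₁ᴴ (1_A ⊗ U_B)ᴴ U₀ Ψ⟩|². Then for any prior probabilities P₀ ∈ [0,1] and P₁ = 1 − P₀, the average error probability P_e = P₁₀ P₀ + P₀₁ P₁ satisfies P_e ≥ (1/2)(1 − √(1 − 4 P₀ P₁ F)). -/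

import Mathlib

open Matrix Kronecker ComplexOrder

/-- Cauchy–Schwarz for the complex dot product. -/
private lemma dot_cs' {n : Type*} [Fintype n] (u v : n → ℂ) :
    ‖(star u ⬝ᵥ v)‖ ^ 2 ≤ (star u ⬝ᵥ u).re * (star v ⬝ᵥ v).re := by
  have h : ∀ (a b : n → ℂ), star a ⬝ᵥ b =
      inner (𝕜 := ℂ) ((WithLp.equiv 2 (n → ℂ)).symm a) ((WithLp.equiv 2 (n → ℂ)).symm b) := by
    intro a b
    simp [dotProduct, PiLp.inner_apply, RCLike.inner_apply, mul_comm]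
  have h2 : ∀ (a : n → ℂ), (star a ⬝ᵥ a).re = ‖(WithLp.equiv 2 (n → ℂ)).symm a‖ ^ 2 := by
    intro a
    rw [h]
    have := inner_self_eq_norm_sq (𝕜 := ℂ) ((WithLp.equiv 2 (n → ℂ)).symm a)
    simpa using this
  rw [h, h2, h2]
  have hn := norm_inner_le_norm (𝕜 := ℂ) ((WithLp.equiv 2 (n → ℂ)).symm u)
    ((WithLp.equiv 2 (n → ℂ)).symm v)
  calc ‖_‖ ^ 2
      ≤ (‖(WithLp.equiv 2 (n → ℂ)).symm u‖ * ‖(WithLp.equiv 2 (n → ℂ)).symm v‖) ^ 2 := by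
        exact pow_le_pow_left₀ (norm_nonneg _) hn 2
    _ = _ := by ring

/-- Cauchy–Schwarz for a positive semidefinite weight. -/
private lemma psd_cs' {n : Type*} [Fintype n] [DecidableEq n] {M : Matrix n n ℂ}
    (hM : M.PosSemidef) (u v : n → ℂ) :
    ‖(star u ⬝ᵥ (M *ᵥ v))‖ ^ 2 ≤
      (star u ⬝ᵥ (M *ᵥ u)).re * (star v ⬝ᵥ (M *ᵥ v)).re := by
  obtain ⟨B, rfl⟩ : ∃ B : Matrix n n ℂ, M = Bᴴ * B := by
    open scoped MatrixOrder in exact CStarAlgebra.nonneg_iff_eq_star_mul_self.mp hM.nonneg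
  have key : ∀ (a b : n → ℂ), star a ⬝ᵥ ((Bᴴ * B) *ᵥ b) = star (B *ᵥ a) ⬝ᵥ (B *ᵥ b) := by
    intro a b
    rw [star_mulVec, ← Matrix.mulVec_mulVec, dotProduct_mulVec]
  rw [key, key, key]
  exact dot_cs' _ _

private lemma dot_conj' {n m : Type*} [Fintype n] [Fintype m] (N : Matrix m n ℂ)
    (M : Matrix m m ℂ) (v : n → ℂ) :
    star (N *ᵥ v) ⬝ᵥ (M *ᵥ (N *ᵥ v)) = star v ⬝ᵥ ((Nᴴ * M * N) *ᵥ v) := by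
  simp [star_mulVec, dotProduct_mulVec, Matrix.vecMul_vecMul, Matrix.mul_assoc]

private lemma trace_outer' {n : Type*} [Fintype n] (M : Matrix n n ℂ) (v : n → ℂ) :
    (M * Matrix.vecMulVec v (star v)).trace = star v ⬝ᵥ (M *ᵥ v) := by
  simp only [Matrix.trace, Matrix.diag, Matrix.mul_apply, Matrix.vecMulVec_apply,
    dotProduct, Matrix.mulVec, Pi.star_apply, Finset.mul_sum]
  congr 1; ext i
  congr 1; ext j
  ring

private lemma kron_ct' {l m n p : Type*} (A : Matrix l m ℂ) (B : Matrix n p ℂ) :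
    (A ⊗ₖ B)ᴴ = Aᴴ ⊗ₖ Bᴴ := by
  ext ⟨i, j⟩ ⟨k, l⟩
  simp [Matrix.conjTranspose_apply, Matrix.kroneckerMap_apply, mul_comm]

private lemma kron_one_psd' {dA dB : ℕ} {E : Matrix (Fin dA) (Fin dA) ℂ} (hE : E.PosSemidef) :
    (E ⊗ₖ (1 : Matrix (Fin dB) (Fin dB) ℂ)).PosSemidef := by
  obtain ⟨B, rfl⟩ : ∃ B : Matrix (Fin dA) (Fin dA) ℂ, E = Bᴴ * B := by
    open scoped MatrixOrder in exact CStarAlgebra.nonneg_iff_eq_star_mul_self.mp hE.nonneg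
  have h : (Bᴴ * B) ⊗ₖ (1 : Matrix (Fin dB) (Fin dB) ℂ) =
      (B ⊗ₖ (1 : Matrix (Fin dB) (Fin dB) ℂ))ᴴ * (B ⊗ₖ (1 : Matrix (Fin dB) (Fin dB) ℂ)) := by
    rw [kron_ct', ← Matrix.mul_kronecker_mul]
    simp
  rw [h]
  exact Matrix.posSemidef_conjTranspose_mul_self _

private lemma psd_re_nonneg' {n : Type*} [Fintype n] {M : Matrix n n ℂ} (hM : M.PosSemidef)
    (v : n → ℂ) : 0 ≤ (star v ⬝ᵥ (M *ᵥ v)).re := by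
  have := hM.dotProduct_mulVec_nonneg v
  rw [Complex.le_def] at this
  simpa using this.1

private lemma scalar_bound' {P₀ x y G : ℝ} (hP : 0 ≤ P₀) (hP1 : P₀ ≤ 1)
    (hx0 : 0 ≤ x) (hx1 : x ≤ 1) (hy0 : 0 ≤ y) (hy1 : y ≤ 1) (hG : 0 ≤ G)
    (hCS : Real.sqrt G ≤ Real.sqrt ((1 - x) * y) + Real.sqrt (x * (1 - y))) :
    (1 / 2) * (1 - Real.sqrt (1 - 4 * P₀ * (1 - P₀) * G)) ≤ x * P₀ + y * (1 - P₀) := by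
  set u := Real.sqrt ((1 - x) * y) with hu_def
  set v := Real.sqrt (x * (1 - y)) with hv_def
  set p := Real.sqrt (x * (1 - x)) with hp_def
  set q := Real.sqrt (y * (1 - y)) with hq_def
  have hu2 : u ^ 2 = (1 - x) * y := Real.sq_sqrt (by nlinarith)
  have hv2 : v ^ 2 = x * (1 - y) := Real.sq_sqrt (by nlinarith)
  have hp2 : p ^ 2 = x * (1 - x) := Real.sq_sqrt (by nlinarith)
  have hq2 : q ^ 2 = y * (1 - y) := Real.sq_sqrt (by nlinarith)
  have huvpq : u * v = p * q := by
    rw [hu_def, hv_def, hp_def, hq_def, ← Real.sqrt_mul (by nlinarith),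
      ← Real.sqrt_mul (by nlinarith)]
    ring_nf
  have hG2 : G ≤ (u + v) ^ 2 := by
    calc G = Real.sqrt G ^ 2 := (Real.sq_sqrt hG).symm
      _ ≤ (u + v) ^ 2 := pow_le_pow_left₀ (Real.sqrt_nonneg _) hCS 2
  set s := x * P₀ + y * (1 - P₀) with hs_def
  have key : 4 * P₀ * (1 - P₀) * G ≤ 4 * s * (1 - s) := by
    have h1 : P₀ * (1 - P₀) * G ≤ P₀ * (1 - P₀) * (u + v) ^ 2 :=
      mul_le_mul_of_nonneg_left hG2 (mul_nonneg hP (by linarith))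
    have hid : s * (1 - s) - P₀ * (1 - P₀) * (u + v) ^ 2 = (P₀ * p - (1 - P₀) * q) ^ 2 := by
      rw [hs_def]
      linear_combination (-(P₀ * (1 - P₀))) * hu2 + (-(P₀ * (1 - P₀))) * hv2 +
        (-(P₀ ^ 2)) * hp2 + (-((1 - P₀) ^ 2)) * hq2 + (-(2 * P₀ * (1 - P₀))) * huvpq
    linarith [h1, hid, sq_nonneg (P₀ * p - (1 - P₀) * q)]
  rcases le_or_gt (1 : ℝ) (2 * s) with h | h
  · have : 0 ≤ Real.sqrt (1 - 4 * P₀ * (1 - P₀) * G) := Real.sqrt_nonneg _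
    linarith
  · have h2s : 0 ≤ 1 - 2 * s := by linarith
    have hsq : (1 - 2 * s) ^ 2 ≤ 1 - 4 * P₀ * (1 - P₀) * G := by nlinarith
    have : 1 - 2 * s ≤ Real.sqrt (1 - 4 * P₀ * (1 - P₀) * G) := by
      calc 1 - 2 * s = Real.sqrt ((1 - 2 * s) ^ 2) := (Real.sqrt_sq h2s).symm
        _ ≤ _ := Real.sqrt_le_sqrt hsq
    linarith

/-- Fidelity bound, Bayes criterion: the average error probability
`P_e = P₁₀ P₀ + P₀₁ P₁` satisfies `P_e ≥ (1/2)(1 − √(1 − 4 P₀ P₁ F))`, where `F` is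
the fidelity `|⟨Ψ| U₁ᴴ (1_A ⊗ U_B)ᴴ U₀ |Ψ⟩|²`. -/
theorem stmt_2 (dA dB : ℕ) (hA : 0 < dA) (hB : 0 < dB)
    (Ψ : Fin dA × Fin dB → ℂ) (hΨ : ∑ i, ‖Ψ i‖ ^ 2 = 1)
    (U₀ U₁ : Matrix (Fin dA × Fin dB) (Fin dA × Fin dB) ℂ)
    (hU₀ : U₀ ∈ Matrix.unitaryGroup (Fin dA × Fin dB) ℂ)
    (hU₁ : U₁ ∈ Matrix.unitaryGroup (Fin dA × Fin dB) ℂ)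
    (U_B : Matrix (Fin dB) (Fin dB) ℂ)
    (hUB : U_B ∈ Matrix.unitaryGroup (Fin dB) ℂ)
    (E₀ E₁ : Matrix (Fin dA) (Fin dA) ℂ)
    (hE₀ : E₀.PosSemidef) (hE₁ : E₁.PosSemidef)
    (hPOVM : E₀ + E₁ = 1)
    (P₀ : ℝ) (hP₀ : P₀ ∈ Set.Icc (0 : ℝ) 1) :
    (1 / 2) * (1 - Real.sqrt (1 - 4 * P₀ * (1 - P₀) *
        ‖(star Ψ ⬝ᵥ
          ((U₁ᴴ * ((1 : Matrix (Fin dA) (Fin dA) ℂ) ⊗ₖ U_B)ᴴ * U₀) *ᵥ Ψ))‖ ^ 2)) ≤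
      (((E₁ ⊗ₖ (1 : Matrix (Fin dB) (Fin dB) ℂ)) *
          (U₀ * Matrix.vecMulVec Ψ (star Ψ) * U₀ᴴ)).trace).re * P₀ +
        (((E₀ ⊗ₖ (1 : Matrix (Fin dB) (Fin dB) ℂ)) *
          (U₁ * Matrix.vecMulVec Ψ (star Ψ) * U₁ᴴ)).trace).re * (1 - P₀) := by
  obtain ⟨hP0, hP1⟩ := hP₀
  set M₀ : Matrix (Fin dA × Fin dB) (Fin dA × Fin dB) ℂ :=
    E₀ ⊗ₖ (1 : Matrix (Fin dB) (Fin dB) ℂ) with hM₀_def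
  set M₁ : Matrix (Fin dA × Fin dB) (Fin dA × Fin dB) ℂ :=
    E₁ ⊗ₖ (1 : Matrix (Fin dB) (Fin dB) ℂ) with hM₁_def
  have hM₀ : M₀.PosSemidef := kron_one_psd' hE₀
  have hM₁ : M₁.PosSemidef := kron_one_psd' hE₁
  have hMsum : M₀ + M₁ = 1 := by
    rw [hM₀_def, hM₁_def, ← Matrix.add_kronecker, hPOVM, Matrix.one_kronecker_one]
  set W : Matrix (Fin dA × Fin dB) (Fin dA × Fin dB) ℂ :=
    ((1 : Matrix (Fin dA) (Fin dA) ℂ) ⊗ₖ U_B) * U₁ with hW_def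
  set a : Fin dA × Fin dB → ℂ := U₀ *ᵥ Ψ with ha_def
  set c : Fin dA × Fin dB → ℂ := W *ᵥ Ψ with hc_def
  set b : Fin dA × Fin dB → ℂ := U₁ *ᵥ Ψ with hb_def
  -- unitarity facts
  have hU₀u : U₀ᴴ * U₀ = 1 := by
    have := hU₀.1; rwa [Matrix.star_eq_conjTranspose] at this
  have hU₁u : U₁ᴴ * U₁ = 1 := by
    have := hU₁.1; rwa [Matrix.star_eq_conjTranspose] at this
  have hUBu : U_Bᴴ * U_B = 1 := by
    have := hUB.1; rwa [Matrix.star_eq_conjTranspose] at this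
  have hWu : Wᴴ * W = 1 := by
    rw [hW_def, Matrix.conjTranspose_mul, kron_ct']
    calc U₁ᴴ * ((1 : Matrix (Fin dA) (Fin dA) ℂ)ᴴ ⊗ₖ U_Bᴴ) *
          (((1 : Matrix (Fin dA) (Fin dA) ℂ) ⊗ₖ U_B) * U₁)
        = U₁ᴴ * (((1 : Matrix (Fin dA) (Fin dA) ℂ)ᴴ ⊗ₖ U_Bᴴ) *
            ((1 : Matrix (Fin dA) (Fin dA) ℂ) ⊗ₖ U_B)) * U₁ := by
          rw [Matrix.mul_assoc, Matrix.mul_assoc, Matrix.mul_assoc]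
      _ = U₁ᴴ * U₁ := by
          rw [← Matrix.mul_kronecker_mul]
          simp [hUBu]
      _ = 1 := hU₁u
  -- norm of Ψ
  have hΨnorm : star Ψ ⬝ᵥ Ψ = 1 := by
    have hz : ∀ z : ℂ, (starRingEnd ℂ) z * z = ((‖z‖ ^ 2 : ℝ) : ℂ) := by
      intro z
      rw [mul_comm, Complex.mul_conj']
      push_cast
      ring
    calc star Ψ ⬝ᵥ Ψ = ∑ i, (starRingEnd ℂ) (Ψ i) * Ψ i := by
          simp [dotProduct]
      _ = ((∑ i, ‖Ψ i‖ ^ 2 : ℝ) : ℂ) := by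
          push_cast
          exact Finset.sum_congr rfl fun i _ => by rw [hz]; push_cast; ring
      _ = 1 := by rw [hΨ]; norm_num
  have norm_of : ∀ (U : Matrix (Fin dA × Fin dB) (Fin dA × Fin dB) ℂ), Uᴴ * U = 1 →
      star (U *ᵥ Ψ) ⬝ᵥ (U *ᵥ Ψ) = 1 := by
    intro U hU
    have h1 : star (U *ᵥ Ψ) ⬝ᵥ ((1 : Matrix (Fin dA × Fin dB) (Fin dA × Fin dB) ℂ) *ᵥ (U *ᵥ Ψ))
        = star Ψ ⬝ᵥ ((Uᴴ * 1 * U) *ᵥ Ψ) := dot_conj' U 1 Ψ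
    rw [Matrix.one_mulVec] at h1
    rw [h1, Matrix.mul_one, hU, Matrix.one_mulVec, hΨnorm]
  have ha1 : star a ⬝ᵥ a = 1 := norm_of U₀ hU₀u
  have hc1 : star c ⬝ᵥ c = 1 := norm_of W hWu
  -- real quantities
  set x : ℝ := (star a ⬝ᵥ (M₁ *ᵥ a)).re with hx_def
  set x' : ℝ := (star a ⬝ᵥ (M₀ *ᵥ a)).re with hx'_def
  set y : ℝ := (star c ⬝ᵥ (M₀ *ᵥ c)).re with hy_def
  set y' : ℝ := (star c ⬝ᵥ (M₁ *ᵥ c)).re with hy'_def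
  have hx0 : 0 ≤ x := psd_re_nonneg' hM₁ a
  have hx'0 : 0 ≤ x' := psd_re_nonneg' hM₀ a
  have hy0 : 0 ≤ y := psd_re_nonneg' hM₀ c
  have hy'0 : 0 ≤ y' := psd_re_nonneg' hM₁ c
  have sum_of : ∀ v : Fin dA × Fin dB → ℂ, star v ⬝ᵥ v = 1 →
      (star v ⬝ᵥ (M₀ *ᵥ v)).re + (star v ⬝ᵥ (M₁ *ᵥ v)).re = 1 := by
    intro v hv
    have : star v ⬝ᵥ (M₀ *ᵥ v) + star v ⬝ᵥ (M₁ *ᵥ v) = 1 := by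
      rw [← dotProduct_add, ← Matrix.add_mulVec, hMsum, Matrix.one_mulVec, hv]
    calc (star v ⬝ᵥ (M₀ *ᵥ v)).re + (star v ⬝ᵥ (M₁ *ᵥ v)).re
        = (star v ⬝ᵥ (M₀ *ᵥ v) + star v ⬝ᵥ (M₁ *ᵥ v)).re := by rw [Complex.add_re]
      _ = 1 := by rw [this]; norm_num
  have hxs : x' + x = 1 := sum_of a ha1
  have hys : y + y' = 1 := sum_of c hc1
  have hx1 : x ≤ 1 := by linarith
  have hy1 : y ≤ 1 := by linarith
  -- Cauchy-Schwarz
  have cs_piece : ∀ (M : Matrix (Fin dA × Fin dB) (Fin dA × Fin dB) ℂ), M.PosSemidef →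
      ‖(star c ⬝ᵥ (M *ᵥ a))‖ ≤
        Real.sqrt ((star c ⬝ᵥ (M *ᵥ c)).re * (star a ⬝ᵥ (M *ᵥ a)).re) := by
    intro M hM
    have h := psd_cs' hM c a
    calc ‖(star c ⬝ᵥ (M *ᵥ a))‖
        = Real.sqrt (‖(star c ⬝ᵥ (M *ᵥ a))‖ ^ 2) := by
          rw [Real.sqrt_sq (norm_nonneg _)]
      _ ≤ _ := Real.sqrt_le_sqrt h
  have habs : ‖(star c ⬝ᵥ a)‖ ≤ Real.sqrt (y * x') + Real.sqrt (y' * x) := by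
    have hsplit : star c ⬝ᵥ a = star c ⬝ᵥ (M₀ *ᵥ a) + star c ⬝ᵥ (M₁ *ᵥ a) := by
      rw [← dotProduct_add, ← Matrix.add_mulVec, hMsum, Matrix.one_mulVec]
    calc ‖(star c ⬝ᵥ a)‖
        ≤ ‖(star c ⬝ᵥ (M₀ *ᵥ a))‖ + ‖(star c ⬝ᵥ (M₁ *ᵥ a))‖ := by
          rw [hsplit]; exact norm_add_le _ _
      _ ≤ Real.sqrt (y * x') + Real.sqrt (y' * x) :=
          add_le_add (cs_piece M₀ hM₀) (cs_piece M₁ hM₁)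
  -- fidelity rewrite
  have hfid : star Ψ ⬝ᵥ ((U₁ᴴ * ((1 : Matrix (Fin dA) (Fin dA) ℂ) ⊗ₖ U_B)ᴴ * U₀) *ᵥ Ψ)
      = star c ⬝ᵥ a := by
    rw [hc_def, ha_def, hW_def, star_mulVec, Matrix.conjTranspose_mul]
    simp [dotProduct_mulVec, Matrix.vecMul_vecMul, Matrix.mul_assoc]
  -- trace rewrites
  have tr_eq : ∀ (M U : Matrix (Fin dA × Fin dB) (Fin dA × Fin dB) ℂ),
      ((M * (U * Matrix.vecMulVec Ψ (star Ψ) * Uᴴ)).trace)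
        = star (U *ᵥ Ψ) ⬝ᵥ (M *ᵥ (U *ᵥ Ψ)) := by
    intro M U
    have h1 : M * (U * Matrix.vecMulVec Ψ (star Ψ) * Uᴴ)
        = (M * U) * Matrix.vecMulVec Ψ (star Ψ) * Uᴴ := by
      rw [Matrix.mul_assoc, Matrix.mul_assoc, Matrix.mul_assoc]
    rw [h1, Matrix.trace_mul_cycle, ← Matrix.mul_assoc, trace_outer', dot_conj']
  have htr₁ : (((E₁ ⊗ₖ (1 : Matrix (Fin dB) (Fin dB) ℂ)) *
      (U₀ * Matrix.vecMulVec Ψ (star Ψ) * U₀ᴴ)).trace).re = x := by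
    rw [hx_def, ha_def, ← hM₁_def, tr_eq M₁ U₀]
  -- y in terms of b
  have hyb : y = (star b ⬝ᵥ (M₀ *ᵥ b)).re := by
    have hcomm : ((1 : Matrix (Fin dA) (Fin dA) ℂ) ⊗ₖ U_B)ᴴ * M₀ *
        ((1 : Matrix (Fin dA) (Fin dA) ℂ) ⊗ₖ U_B) = M₀ := by
      rw [hM₀_def, kron_ct', ← Matrix.mul_kronecker_mul, ← Matrix.mul_kronecker_mul]
      simp [hUBu]
    have h1 : star c ⬝ᵥ (M₀ *ᵥ c) = star Ψ ⬝ᵥ ((Wᴴ * M₀ * W) *ᵥ Ψ) := by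
      rw [hc_def]; exact dot_conj' W M₀ Ψ
    have h2 : Wᴴ * M₀ * W = U₁ᴴ * M₀ * U₁ := by
      rw [hW_def, Matrix.conjTranspose_mul]
      calc U₁ᴴ * ((1 : Matrix (Fin dA) (Fin dA) ℂ) ⊗ₖ U_B)ᴴ * M₀ *
            (((1 : Matrix (Fin dA) (Fin dA) ℂ) ⊗ₖ U_B) * U₁)
          = U₁ᴴ * (((1 : Matrix (Fin dA) (Fin dA) ℂ) ⊗ₖ U_B)ᴴ * M₀ *
              ((1 : Matrix (Fin dA) (Fin dA) ℂ) ⊗ₖ U_B)) * U₁ := by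
            simp only [Matrix.mul_assoc]
        _ = U₁ᴴ * M₀ * U₁ := by rw [hcomm, Matrix.mul_assoc]
    have h3 : star b ⬝ᵥ (M₀ *ᵥ b) = star Ψ ⬝ᵥ ((U₁ᴴ * M₀ * U₁) *ᵥ Ψ) := by
      rw [hb_def]; exact dot_conj' U₁ M₀ Ψ
    rw [hy_def, h1, h2, ← h3]
  have htr₀ : (((E₀ ⊗ₖ (1 : Matrix (Fin dB) (Fin dB) ℂ)) *
      (U₁ * Matrix.vecMulVec Ψ (star Ψ) * U₁ᴴ)).trace).re = y := by
    rw [hyb, hb_def, ← hM₀_def, tr_eq M₀ U₁]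
  rw [htr₁, htr₀, hfid]
  -- apply scalar bound
  have hCS : Real.sqrt (‖(star c ⬝ᵥ a)‖ ^ 2) ≤
      Real.sqrt ((1 - x) * y) + Real.sqrt (x * (1 - y)) := by
    rw [Real.sqrt_sq (norm_nonneg _)]
    have e1 : (1 - x) * y = y * x' := by rw [mul_comm]; congr 1; linarith
    have e2 : x * (1 - y) = y' * x := by rw [mul_comm]; congr 1; linarith
    rw [e1, e2]
    exact habs
  exact scalar_bound' hP0 hP1 hx0 hx1 hy0 hy1 (sq_nonneg _) hCS
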